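/- Let μ be a finite positive Borel measure on (0,∞) (so that H_μ is bounded on A^2(𝕌)). Then for all f, g ∈ A^2(𝕌), ⟨H_μ(f), g⟩ = ⟨f, H_μ^*(g)⟩, where ⟨u, v⟩ = (1/π)∫_𝕌 u(z) conj(v(z)) dA(z) and H_μ^*(g)(z) = ∫_0^∞ t g(tz) dμ(t); that is, the Hilbert-space adjoint of H_μ on A^2(𝕌) is the quasi-Hausdorff operator H_μ^*. -/

import Mathlib

open MeasureTheory Complex Set Filter
open scoped ENNReal NNReal Topology Real

noncomputable section

/-- The upper half plane `{z : ℂ | Im z > 0}`. -/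
def UHP : Set ℂ := {z : ℂ | 0 < z.im}

/-- The `p`-th power of the Bergman `A^p(UHP)` norm: `(1/π) ∫_UHP |f|^p dA`. -/
def apNormPow (p : ℝ) (f : ℂ → ℂ) : ℝ≥0∞ :=
  ENNReal.ofReal (1 / Real.pi) * ∫⁻ z in UHP, (‖f z‖₊ : ℝ≥0∞) ^ p

/-- The Bergman `A^p(UHP)` norm: `((1/π) ∫_UHP |f|^p dA)^(1/p)`. -/
def apNorm (p : ℝ) (f : ℂ → ℂ) : ℝ≥0∞ := apNormPow p f ^ (1 / p)

/-- Membership in the Bergman space `A^p(UHP)`: holomorphic on `UHP` with finite norm. -/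
def MemAp (p : ℝ) (f : ℂ → ℂ) : Prop :=
  DifferentiableOn ℂ f UHP ∧ apNormPow p f < ⊤

/-- The Hausdorff operator `H_μ f z = ∫_0^∞ (1/t) f(z/t) dμ(t)`. -/
def hausdorffOp (μ : Measure ℝ) (f : ℂ → ℂ) (z : ℂ) : ℂ :=
  ∫ t in Ioi (0:ℝ), (t : ℂ)⁻¹ * f (z / (t : ℂ)) ∂μ

/-- The quasi-Hausdorff operator `H_μ^* f z = ∫_0^∞ t f(tz) dμ(t)`. -/
def quasiHausdorff (μ : Measure ℝ) (f : ℂ → ℂ) (z : ℂ) : ℂ :=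
  ∫ t in Ioi (0:ℝ), (t : ℂ) * f ((t : ℂ) * z) ∂μ

/-!
For fixed `t > 0` the substitution `z = t w` on the upper half plane (Jacobian `t²`) turns
`∫ t⁻¹ f(z/t) conj(g z) dA` into `∫ f w conj(t g(t w)) dA`, so the identity is Fubini's theorem
for the `t`-integral. Fubini applies because `f ↦ t f(t ·)` is an isometry of `L²(𝕌)`: by
Cauchy–Schwarz every `t`-slice of either integrand has `L¹` norm at most `‖f‖₂ ‖g‖₂`, and `μ` is
finite.
-/

open scoped Pointwise ComplexConjugate

lemma isOpen_UHP : IsOpen UHP := isOpen_lt continuous_const Complex.continuous_im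

lemma ofReal_mul_mem_UHP {t : ℝ} (ht : 0 < t) {z : ℂ} : (t : ℂ) * z ∈ UHP ↔ z ∈ UHP := by
  show 0 < ((t : ℂ) * z).im ↔ 0 < z.im
  rw [Complex.im_ofReal_mul]
  exact mul_pos_iff_of_pos_left ht

lemma smul_UHP {t : ℝ} (ht : 0 < t) : t • UHP = UHP := by
  ext z
  rw [mem_smul_set_iff_inv_smul_mem₀ ht.ne', Complex.real_smul, ofReal_mul_mem_UHP (inv_pos.2 ht)]

lemma setLIntegral_UHP_comp_ofReal_mul {t : ℝ} (ht : 0 < t) (h : ℂ → ℝ≥0∞) :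
    ∫⁻ w in UHP, h ((t : ℂ) * w) = ENNReal.ofReal (t ^ 2)⁻¹ * ∫⁻ z in UHP, h z := by
  let e : ℂ ≃ᵐ ℂ := (Homeomorph.smul (Units.mk0 t ht.ne')).toMeasurableEquiv
  have he : ∀ w, e w = (t : ℂ) * w := fun _ => Complex.real_smul
  have hpre : e ⁻¹' UHP = UHP := Set.ext fun w => by rw [mem_preimage, he, ofReal_mul_mem_UHP ht]
  have hmap : MeasurePreserving e volume (ENNReal.ofReal (t ^ 2)⁻¹ • volume) := by
    refine ⟨e.measurable, ?_⟩
    have := Measure.map_addHaar_smul (volume : Measure ℂ) ht.ne'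
    rwa [Complex.finrank_real_complex, abs_of_pos (by positivity)] at this
  have := hmap.setLIntegral_comp_preimage_emb e.measurableEmbedding h UHP
  rw [hpre, Measure.restrict_smul, lintegral_smul_measure, smul_eq_mul] at this
  simpa only [he] using this

lemma setIntegral_UHP_comp_ofReal_mul {t : ℝ} (ht : 0 < t) (φ : ℂ → ℂ) :
    ∫ w in UHP, φ ((t : ℂ) * w) = (t ^ 2)⁻¹ • ∫ z in UHP, φ z := by
  have := Measure.setIntegral_comp_smul_of_pos (volume : Measure ℂ) φ UHP ht
  rwa [Complex.finrank_real_complex, smul_UHP ht] at this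

def dilation (t : ℝ) (f : ℂ → ℂ) (z : ℂ) : ℂ := t * f (t * z)

lemma eLpNorm_dilation {t : ℝ} (ht : 0 < t) (f : ℂ → ℂ) :
    eLpNorm (dilation t f) 2 (volume.restrict UHP) = eLpNorm f 2 (volume.restrict UHP) := by
  have hsq : ∀ w, ‖dilation t f w‖ₑ ^ (2 : ℝ) = ENNReal.ofReal (t ^ 2) * ‖f (t * w)‖ₑ ^ (2 : ℝ) := by
    intro w
    rw [dilation, enorm_mul, ENNReal.mul_rpow_of_nonneg _ _ zero_le_two, ← ofReal_norm,
      Complex.norm_real, Real.norm_of_nonneg ht.le, ENNReal.ofReal_rpow_of_nonneg ht.le zero_le_two]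
    norm_cast
  simp only [eLpNorm_eq_lintegral_rpow_enorm_toReal two_ne_zero ENNReal.ofNat_ne_top,
    ENNReal.toReal_ofNat, hsq]
  rw [lintegral_const_mul' _ _ ENNReal.ofReal_ne_top,
    setLIntegral_UHP_comp_ofReal_mul ht (fun z => ‖f z‖ₑ ^ (2 : ℝ)), ← mul_assoc,
    ← ENNReal.ofReal_mul (by positivity), mul_inv_cancel₀ (by positivity), ENNReal.ofReal_one,
    one_mul]

lemma MemAp.memLp {f : ℂ → ℂ} (hf : MemAp 2 f) : MemLp f 2 (volume.restrict UHP) := by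
  refine ⟨hf.1.continuousOn.aestronglyMeasurable isOpen_UHP.measurableSet, ?_⟩
  have hπ : ENNReal.ofReal (1 / Real.pi) ≠ 0 := by simpa using Real.pi_pos
  have hfin : ∫⁻ z in UHP, ‖f z‖ₑ ^ (2 : ℝ) < ⊤ := ENNReal.lt_top_of_mul_ne_top_right hf.2.ne hπ
  rw [eLpNorm_eq_lintegral_rpow_enorm_toReal two_ne_zero ENNReal.ofNat_ne_top]
  exact ENNReal.rpow_lt_top_of_nonneg (by norm_num) hfin.ne

lemma continuousOn_dilation {f : ℂ → ℂ} (hf : ContinuousOn f UHP) :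
    ContinuousOn (fun p : ℝ × ℂ => dilation p.1 f p.2) (Ioi 0 ×ˢ UHP) :=
  (Complex.continuous_ofReal.comp continuous_fst).continuousOn.mul <|
    hf.comp (by fun_prop : Continuous fun p : ℝ × ℂ => (p.1 : ℂ) * p.2).continuousOn
      fun _ hp => (ofReal_mul_mem_UHP hp.1).2 hp.2

lemma continuousOn_dilation_inv {f : ℂ → ℂ} (hf : ContinuousOn f UHP) :
    ContinuousOn (fun p : ℝ × ℂ => dilation p.1⁻¹ f p.2) (Ioi 0 ×ˢ UHP) :=
  (continuousOn_dilation hf).comp ((continuous_fst.continuousOn.inv₀ fun _ hp => hp.1.ne').prodMk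
    continuous_snd.continuousOn) fun p hp => ⟨inv_pos.2 (show 0 < p.1 from hp.1), hp.2⟩

lemma eLpNorm_one_mul_conj_le {α : Type*} [MeasurableSpace α] {ν : Measure α} {u v : α → ℂ}
    (hu : AEStronglyMeasurable u ν) (hv : AEStronglyMeasurable v ν) :
    eLpNorm (fun x => u x * conj (v x)) 1 ν ≤ eLpNorm u 2 ν * eLpNorm v 2 ν := by
  simpa using eLpNorm_le_eLpNorm_mul_eLpNorm'_of_norm hu hv (fun a b => a * conj b) 1
    (ae_of_all _ fun x => by simp)

lemma integrable_prod_of_ae_eLpNorm_le {α β E : Type*} [MeasurableSpace α] [MeasurableSpace β]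
    [NormedAddCommGroup E] {μ : Measure α} [IsFiniteMeasure μ] {ν : Measure β} [SFinite ν]
    {K : α × β → E} (hK : AEStronglyMeasurable K (μ.prod ν)) {C : ℝ≥0∞} (hC : C ≠ ⊤)
    (hbound : ∀ᵐ a ∂μ, eLpNorm (fun b => K (a, b)) 1 ν ≤ C) : Integrable K (μ.prod ν) := by
  refine ⟨hK, ?_⟩
  calc ∫⁻ p, ‖K p‖ₑ ∂(μ.prod ν) = ∫⁻ a, ∫⁻ b, ‖K (a, b)‖ₑ ∂ν ∂μ := lintegral_prod _ hK.enorm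
    _ ≤ ∫⁻ _, C ∂μ := lintegral_mono_ae <| hbound.mono fun a ha => by
        rwa [eLpNorm_one_eq_lintegral_enorm] at ha
    _ < ⊤ := by
        rw [lintegral_const]
        exact ENNReal.mul_lt_top hC.lt_top (measure_lt_top _ _)

lemma integrable_mul_conj_of_eLpNorm_le (μ : Measure ℝ) [IsFiniteMeasure μ] {u v : ℝ × ℂ → ℂ}
    (hu : ContinuousOn u (Ioi 0 ×ˢ UHP)) (hv : ContinuousOn v (Ioi 0 ×ˢ UHP)) {A B : ℝ≥0∞}
    (hA : A ≠ ⊤) (hB : B ≠ ⊤)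
    (huA : ∀ t : ℝ, 0 < t → eLpNorm (fun z => u (t, z)) 2 (volume.restrict UHP) ≤ A)
    (hvB : ∀ t : ℝ, 0 < t → eLpNorm (fun z => v (t, z)) 2 (volume.restrict UHP) ≤ B) :
    Integrable (fun p => u p * conj (v p)) ((μ.restrict (Ioi 0)).prod (volume.restrict UHP)) := by
  have hU := isOpen_UHP.measurableSet
  have hslice : ∀ {w : ℝ × ℂ → ℂ}, ContinuousOn w (Ioi 0 ×ˢ UHP) → ∀ t : ℝ, 0 < t →
      AEStronglyMeasurable (fun z => w (t, z)) (volume.restrict UHP) := fun hw t ht =>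
    (hw.comp (Continuous.prodMk_right t).continuousOn fun _ hz => ⟨ht, hz⟩).aestronglyMeasurable hU
  refine integrable_prod_of_ae_eLpNorm_le ?_ (ENNReal.mul_ne_top hA hB) ?_
  · rw [Measure.prod_restrict]
    exact (hu.mul (continuous_conj.comp_continuousOn hv)).aestronglyMeasurable
      (measurableSet_Ioi.prod hU)
  · filter_upwards [ae_restrict_mem measurableSet_Ioi] with t ht
    exact (eLpNorm_one_mul_conj_le (hslice hu t ht) (hslice hv t ht)).trans
      (mul_le_mul' (huA t ht) (hvB t ht))

lemma hausdorffOp_eq_integral_dilation (μ : Measure ℝ) (f : ℂ → ℂ) (z : ℂ) :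
    hausdorffOp μ f z = ∫ t in Ioi 0, dilation t⁻¹ f z ∂μ := by
  simp only [hausdorffOp, dilation, Complex.ofReal_inv, div_eq_inv_mul]

lemma quasiHausdorff_eq_integral_dilation (μ : Measure ℝ) (f : ℂ → ℂ) (z : ℂ) :
    quasiHausdorff μ f z = ∫ t in Ioi 0, dilation t f z ∂μ := rfl

lemma setIntegral_UHP_dilation_inv_mul_conj {t : ℝ} (ht : 0 < t) (f g : ℂ → ℂ) :
    ∫ z in UHP, dilation t⁻¹ f z * conj (g z) = ∫ w in UHP, f w * conj (dilation t g w) := by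
  have ht₀ : (t : ℂ) ≠ 0 := Complex.ofReal_ne_zero.2 ht.ne'
  calc ∫ z in UHP, dilation t⁻¹ f z * conj (g z)
      = (t ^ 2) • ∫ w in UHP, dilation t⁻¹ f (t * w) * conj (g (t * w)) := by
        have := setIntegral_UHP_comp_ofReal_mul ht fun z => dilation t⁻¹ f z * conj (g z)
        rw [this, smul_inv_smul₀ (by positivity)]
    _ = ∫ w in UHP, f w * conj (dilation t g w) := by
        rw [← integral_smul]
        refine integral_congr_ae (ae_of_all _ fun w => ?_)
        simp only [dilation, Complex.real_smul, map_mul, Complex.conj_ofReal, Complex.ofReal_inv,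
          Complex.ofReal_pow, inv_mul_cancel_left₀ ht₀]
        field_simp

lemma integrable_dilation_inv_mul_conj (μ : Measure ℝ) [IsFiniteMeasure μ] {f g : ℂ → ℂ}
    (hfc : ContinuousOn f UHP) (hgc : ContinuousOn g UHP) (hf : MemLp f 2 (volume.restrict UHP))
    (hg : MemLp g 2 (volume.restrict UHP)) :
    Integrable (fun p : ℝ × ℂ => dilation p.1⁻¹ f p.2 * conj (g p.2))
      ((μ.restrict (Ioi 0)).prod (volume.restrict UHP)) :=
  integrable_mul_conj_of_eLpNorm_le μ (continuousOn_dilation_inv hfc)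
    (hgc.comp continuous_snd.continuousOn fun _ hp => hp.2) hf.eLpNorm_ne_top hg.eLpNorm_ne_top
    (fun _ ht => (eLpNorm_dilation (inv_pos.2 ht) f).le) fun _ _ => le_rfl

lemma integrable_mul_conj_dilation (μ : Measure ℝ) [IsFiniteMeasure μ] {f g : ℂ → ℂ}
    (hfc : ContinuousOn f UHP) (hgc : ContinuousOn g UHP) (hf : MemLp f 2 (volume.restrict UHP))
    (hg : MemLp g 2 (volume.restrict UHP)) :
    Integrable (fun p : ℝ × ℂ => f p.2 * conj (dilation p.1 g p.2))
      ((μ.restrict (Ioi 0)).prod (volume.restrict UHP)) :=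
  integrable_mul_conj_of_eLpNorm_le μ (hfc.comp continuous_snd.continuousOn fun _ hp => hp.2)
    (continuousOn_dilation hgc) hf.eLpNorm_ne_top hg.eLpNorm_ne_top
    (fun _ _ => le_rfl) fun _ ht => (eLpNorm_dilation ht g).le

theorem stmt15 (μ : Measure ℝ) [IsFiniteMeasure μ]
    (f g : ℂ → ℂ) (hf : MemAp 2 f) (hg : MemAp 2 g) :
    (1 / (Real.pi : ℂ)) * ∫ z in UHP, hausdorffOp μ f z * (starRingEnd ℂ) (g z) =
    (1 / (Real.pi : ℂ)) * ∫ z in UHP, f z * (starRingEnd ℂ) (quasiHausdorff μ g z) := by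
  have hfc := hf.1.continuousOn
  have hgc := hg.1.continuousOn
  congr 1
  calc ∫ z in UHP, hausdorffOp μ f z * conj (g z)
      = ∫ z in UHP, ∫ t in Ioi 0, dilation t⁻¹ f z * conj (g z) ∂μ := by
        simp only [hausdorffOp_eq_integral_dilation, integral_mul_const]
    _ = ∫ t in Ioi 0, (∫ z in UHP, dilation t⁻¹ f z * conj (g z)) ∂μ :=
        (integral_integral_swap (integrable_dilation_inv_mul_conj μ hfc hgc hf.memLp hg.memLp)).symm
    _ = ∫ t in Ioi 0, (∫ w in UHP, f w * conj (dilation t g w)) ∂μ :=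
        setIntegral_congr_fun measurableSet_Ioi fun _ ht =>
          setIntegral_UHP_dilation_inv_mul_conj ht f g
    _ = ∫ w in UHP, ∫ t in Ioi 0, f w * conj (dilation t g w) ∂μ :=
        integral_integral_swap (integrable_mul_conj_dilation μ hfc hgc hf.memLp hg.memLp)
    _ = ∫ w in UHP, f w * conj (quasiHausdorff μ g w) := by
        simp only [quasiHausdorff_eq_integral_dilation, ← integral_conj, integral_const_mul]
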